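/- arXiv:2605.14768 — 8 statements merged into one kernel-verified Lean document; each statement's English description precedes it below -/
import Mathlib

section
/- Let λ₁ ≥ λ₂ ≥ ⋯ ≥ λ_d > 0 be real numbers with sum S and product P, and let 1 ≤ k ≤ d−1. Then λ₁ + ⋯ + λ_k ≤ S − (d−k) · ((k/S)^k · P)^(1/(d−k)). -/
open Finset Real

/-!
Split the `λ_i` into the first `k` and the remaining `d - k`. By AM-GM the product of the first
group is at most `(S / k) ^ k`, and that of the second at most `(R / (d - k)) ^ (d - k)`, where
`R = S - (λ₁ + ⋯ + λ_k)` is its sum. Hence `(k / S) ^ k * P ≤ (R / (d - k)) ^ (d - k)`, and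
taking `(d - k)`-th roots bounds `R` from below.
-/

namespace Real

theorem prod_le_arith_mean_pow {ι : Type*} (s : Finset ι) (f : ι → ℝ) (hf : ∀ i ∈ s, 0 ≤ f i) :
    ∏ i ∈ s, f i ≤ ((∑ i ∈ s, f i) / #s) ^ #s := by
  rcases s.eq_empty_or_nonempty with rfl | hs
  · simp
  have hcard : (0 : ℝ) < #s := by exact_mod_cast hs.card_pos
  have amgm := geom_mean_le_arith_mean s (fun _ ↦ 1) f (fun _ _ ↦ zero_le_one)
    (by simpa using hcard) hf
  simp only [rpow_one, sum_const, nsmul_eq_mul, mul_one, one_mul] at amgm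
  calc ∏ i ∈ s, f i = ((∏ i ∈ s, f i) ^ ((#s : ℝ)⁻¹)) ^ #s :=
        (rpow_inv_natCast_pow (prod_nonneg hf) hs.card_pos.ne').symm
    _ ≤ ((∑ i ∈ s, f i) / #s) ^ #s :=
        pow_le_pow_left₀ (rpow_nonneg (prod_nonneg hf) _) amgm _

theorem card_div_pow_mul_prod_le_one {ι : Type*} (s : Finset ι) (f : ι → ℝ)
    (hf : ∀ i ∈ s, 0 ≤ f i) {S : ℝ} (hS : ∑ i ∈ s, f i ≤ S) :
    (#s / S) ^ #s * ∏ i ∈ s, f i ≤ 1 := by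
  rcases s.eq_empty_or_nonempty with rfl | hs
  · simp
  have hcard : (#s : ℝ) ≠ 0 := by exact_mod_cast hs.card_pos.ne'
  have hsum : 0 ≤ ∑ i ∈ s, f i := sum_nonneg hf
  have hratio : 0 ≤ #s / S := div_nonneg (Nat.cast_nonneg _) (hsum.trans hS)
  -- the product is `1`, or `0` when `S = 0` since `x / 0 = 0`
  have hcancel : #s / S * (S / #s) ≤ 1 := by
    rcases eq_or_ne S 0 with rfl | hS0
    · simp
    · rw [div_mul_div_comm, mul_comm (#s : ℝ), div_self (mul_ne_zero hS0 hcard)]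
  calc (#s / S) ^ #s * ∏ i ∈ s, f i ≤ (#s / S) ^ #s * (S / #s) ^ #s := by
        gcongr
        exact (prod_le_arith_mean_pow s f hf).trans (by gcongr)
    _ = (#s / S * (S / #s)) ^ #s := (mul_pow _ _ _).symm
    _ ≤ 1 := pow_le_one₀ (mul_nonneg hratio (div_nonneg (hsum.trans hS) (Nat.cast_nonneg _)))
        hcancel

theorem natCast_mul_rpow_one_div_le {n : ℕ} {x R : ℝ} (hx : 0 ≤ x) (hR : 0 ≤ R)
    (h : x ≤ (R / n) ^ n) : n * x ^ ((1 : ℝ) / n) ≤ R := by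
  rcases eq_or_ne n 0 with rfl | hn
  · simpa using hR
  have hn' : (0 : ℝ) < n := by exact_mod_cast hn.bot_lt
  calc n * x ^ ((1 : ℝ) / n) ≤ n * ((R / n) ^ n) ^ ((n : ℝ)⁻¹) := by
        rw [one_div]
        gcongr
    _ = R := by rw [pow_rpow_inv_natCast (by positivity) hn, mul_div_cancel₀ _ hn'.ne']

theorem sum_le_sub_card_mul_rpow {ι : Type*} [DecidableEq ι] (s t : Finset ι) (hst : Disjoint s t)
    (f : ι → ℝ) (hf : ∀ i ∈ s ∪ t, 0 ≤ f i) :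
    ∑ i ∈ s, f i ≤ ∑ i ∈ s ∪ t, f i -
      #t * ((#s / ∑ i ∈ s ∪ t, f i) ^ #s * ∏ i ∈ s ∪ t, f i) ^ ((1 : ℝ) / #t) := by
  have hfs : ∀ i ∈ s, 0 ≤ f i := fun i hi ↦ hf i (mem_union_left t hi)
  have hft : ∀ i ∈ t, 0 ≤ f i := fun i hi ↦ hf i (mem_union_right s hi)
  set S := ∑ i ∈ s ∪ t, f i
  have hS : S = ∑ i ∈ s, f i + ∑ i ∈ t, f i := sum_union hst
  have hsum_s : ∑ i ∈ s, f i ≤ S := by linarith [sum_nonneg hft]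
  have key : (#s / S) ^ #s * ∏ i ∈ s ∪ t, f i ≤ ((∑ i ∈ t, f i) / #t) ^ #t :=
    calc (#s / S) ^ #s * ∏ i ∈ s ∪ t, f i
        = ((#s / S) ^ #s * ∏ i ∈ s, f i) * ∏ i ∈ t, f i := by rw [prod_union hst, mul_assoc]
      _ ≤ 1 * ((∑ i ∈ t, f i) / #t) ^ #t :=
        mul_le_mul (card_div_pow_mul_prod_le_one s f hfs hsum_s)
          (prod_le_arith_mean_pow t f hft) (prod_nonneg hft) zero_le_one
      _ = _ := one_mul _
  have hbase : 0 ≤ (#s / S) ^ #s * ∏ i ∈ s ∪ t, f i :=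
    mul_nonneg (pow_nonneg (div_nonneg (Nat.cast_nonneg _) (sum_nonneg hf)) _) (prod_nonneg hf)
  linarith [natCast_mul_rpow_one_div_le hbase (sum_nonneg hft) key]

end Real

theorem stmt0_general (d : ℕ) (lam : ℕ → ℝ)
    (hpos : ∀ i, i < d → 0 < lam i)
    (S P : ℝ) (hS : S = ∑ i ∈ Finset.range d, lam i)
    (hP : P = ∏ i ∈ Finset.range d, lam i)
    (k : ℕ) (hk2 : k ≤ d - 1) :
    ∑ i ∈ Finset.range k, lam i ≤
      S - ((d : ℝ) - k) * (((k / S) ^ k * P) ^ ((1 : ℝ) / ((d : ℝ) - k))) := by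
  have hkd : k ≤ d := by omega
  have hsplit : range d = range k ∪ Ico k d := by
    rw [range_eq_Ico, range_eq_Ico, Ico_union_Ico_eq_Ico (Nat.zero_le k) hkd]
  have hdisj : Disjoint (range k) (Ico k d) := by
    rw [range_eq_Ico]
    exact Ico_disjoint_Ico_consecutive 0 k d
  have hcard : (#(Ico k d) : ℝ) = d - k := by rw [Nat.card_Ico, Nat.cast_sub hkd]
  have h := sum_le_sub_card_mul_rpow (range k) (Ico k d) hdisj lam fun i hi ↦
    (hpos i (mem_range.mp (hsplit ▸ hi))).le
  rwa [← hsplit, card_range, hcard, ← hS, ← hP] at h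

theorem stmt0 (d : ℕ) (hd : 0 < d) (lam : ℕ → ℝ)
    (hmono : ∀ i j, i ≤ j → j < d → lam j ≤ lam i)
    (hpos : ∀ i, i < d → 0 < lam i)
    (S P : ℝ) (hS : S = ∑ i ∈ Finset.range d, lam i)
    (hP : P = ∏ i ∈ Finset.range d, lam i)
    (k : ℕ) (hk1 : 1 ≤ k) (hk2 : k ≤ d - 1) :
    ∑ i ∈ Finset.range k, lam i ≤
      S - ((d : ℝ) - k) * (((k / S) ^ k * P) ^ ((1 : ℝ) / ((d : ℝ) - k))) :=
  stmt0_general d lam hpos S P hS hP k hk2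
end

section
/- Let λ₁ ≥ λ₂ ≥ ⋯ ≥ λ_d > 0 be real numbers with sum S and product P, and let 1 ≤ k ≤ d−1. Then the product of the k smallest numbers satisfies λ_{d−k+1} ⋯ λ_d ≥ ((d−k)/S)^(d−k) · P. -/
/-!
By AM-GM, the first `d - k` numbers, whose sum is at most `S`, have product at most
`(S / (d - k)) ^ (d - k)`; splitting `P` into this product and that of the last `k` numbers
gives the bound.
-/

open Finset Real

theorem Finset.prod_le_arith_mean_pow {ι : Type*} (s : Finset ι) (f : ι → ℝ)
    (hf : ∀ i ∈ s, 0 ≤ f i) : ∏ i ∈ s, f i ≤ ((∑ i ∈ s, f i) / #s) ^ #s := by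
  rcases s.eq_empty_or_nonempty with rfl | hs
  · simp
  have hn : (0 : ℝ) < #s := by exact_mod_cast hs.card_pos
  have hw : ∑ _i ∈ s, (#s : ℝ)⁻¹ = 1 := by simp [hn.ne']
  have amgm := geom_mean_le_arith_mean_weighted s (fun _ ↦ (#s : ℝ)⁻¹) f
    (fun _ _ ↦ by positivity) hw hf
  rw [finsetProd_rpow s f hf, ← mul_sum, inv_mul_eq_div] at amgm
  calc ∏ i ∈ s, f i = ((∏ i ∈ s, f i) ^ (#s : ℝ)⁻¹) ^ #s := by
        rw [← rpow_natCast, ← rpow_mul (prod_nonneg hf), inv_mul_cancel₀ hn.ne', rpow_one]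
    _ ≤ _ := by gcongr; exact rpow_nonneg (prod_nonneg hf) _

theorem Finset.div_pow_card_mul_prod_le_one {ι : Type*} (s : Finset ι) (f : ι → ℝ)
    (hf : ∀ i ∈ s, 0 ≤ f i) {S : ℝ} (hS : ∑ i ∈ s, f i ≤ S) :
    ((#s : ℝ) / S) ^ #s * ∏ i ∈ s, f i ≤ 1 := by
  have hS0 : 0 ≤ S := (sum_nonneg hf).trans hS
  calc ((#s : ℝ) / S) ^ #s * ∏ i ∈ s, f i
      ≤ ((#s : ℝ) / S) ^ #s * (S / #s) ^ #s := by
        gcongr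
        refine (s.prod_le_arith_mean_pow f hf).trans ?_
        gcongr
        exact div_nonneg (sum_nonneg hf) (Nat.cast_nonneg _)
    _ = ((#s : ℝ) / S * (S / #s)) ^ #s := (mul_pow _ _ _).symm
    _ ≤ 1 := by
        -- the product is `1`, or `0` when `S = 0` or `s = ∅`
        apply pow_le_one₀ (by positivity)
        rw [div_mul_div_comm, mul_comm]
        exact div_self_le_one _

theorem stmt1_general (d : ℕ) (lam : ℕ → ℝ)
    (hpos : ∀ i, i < d → 0 < lam i)
    (S P : ℝ) (hS : S = ∑ i ∈ Finset.range d, lam i)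
    (hP : P = ∏ i ∈ Finset.range d, lam i)
    (k : ℕ) (hk2 : k ≤ d - 1) :
    ∏ i ∈ Finset.Ico (d - k) d, lam i ≥ (((d : ℝ) - k) / S) ^ (d - k) * P := by
  have hm : d - k ≤ d := Nat.sub_le d k
  have hnonneg : ∀ i ∈ range (d - k), 0 ≤ lam i :=
    fun i hi ↦ (hpos i ((mem_range.mp hi).trans_le hm)).le
  have head_sum_le : ∑ i ∈ range (d - k), lam i ≤ S :=
    hS ▸ sum_le_sum_of_subset_of_nonneg (range_subset_range.mpr hm)
      fun i hi _ ↦ (hpos i (mem_range.mp hi)).le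
  have head_bound := (range (d - k)).div_pow_card_mul_prod_le_one lam hnonneg head_sum_le
  rw [card_range, Nat.cast_sub (by omega)] at head_bound
  rw [hP, range_eq_Ico, ← prod_Ico_consecutive _ (Nat.zero_le _) hm, ← range_eq_Ico, ← mul_assoc]
  have htail : 0 ≤ ∏ i ∈ Ico (d - k) d, lam i :=
    prod_nonneg fun i hi ↦ (hpos i (mem_Ico.mp hi).2).le
  exact mul_le_of_le_one_left htail head_bound

theorem stmt1 (d : ℕ) (hd : 0 < d) (lam : ℕ → ℝ)
    (hmono : ∀ i j, i ≤ j → j < d → lam j ≤ lam i)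
    (hpos : ∀ i, i < d → 0 < lam i)
    (S P : ℝ) (hS : S = ∑ i ∈ Finset.range d, lam i)
    (hP : P = ∏ i ∈ Finset.range d, lam i)
    (k : ℕ) (hk1 : 1 ≤ k) (hk2 : k ≤ d - 1) :
    ∏ i ∈ Finset.Ico (d - k) d, lam i ≥ (((d : ℝ) - k) / S) ^ (d - k) * P :=
  stmt1_general d lam hpos S P hS hP k hk2
end

section
/- Let λ₁ ≥ λ₂ ≥ ⋯ ≥ λ_d > 0 with sum S and product P, and let 1 ≤ k ≤ l ≤ d−1. Then ((k−1)/S)^(k−1) · P, raised to the power 1/(d−k+1), is at most (λ_k ⋯ λ_l)^(1/(l−k+1)), which is at most (λ_k + ⋯ + λ_l)/(l−k+1), which is at most S/l − (d/l − 1)·((l/S)^l · P)^(1/(d−l)). -/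
/-!
Cut the sequence into a head `[0, k-1)`, the block `[k-1, l)` and a tail `[l, d)`. By AM-GM the
head product is at most `(S/(k-1))^(k-1)`, and by monotonicity every tail entry is at most the
geometric mean `g` of the block, so `((k-1)/S)^(k-1) P ≤ g^(d-k+1)`. Conversely the block average
is at most the average of the first `l` entries, which is `(S - T)/l` with `T` the tail sum; AM-GM
on the first `l` entries gives `(l/S)^l P ≤` tail product, and AM-GM on the tail turns this into
`T ≥ (d-l) ((l/S)^l P)^(1/(d-l))`.
-/

open Finset Real

theorem prod_rpow_one_div_card_le_sum_div_card {ι : Type*} {s : Finset ι} {f : ι → ℝ}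
    (hs : s.Nonempty) (hf : ∀ i ∈ s, 0 ≤ f i) :
    (∏ i ∈ s, f i) ^ (1 / (#s : ℝ)) ≤ (∑ i ∈ s, f i) / #s := by
  simpa using geom_mean_le_arith_mean s 1 f (by simp) (by simpa using hs) hf

theorem prod_le_sum_div_card_pow {ι : Type*} (s : Finset ι) {f : ι → ℝ}
    (hf : ∀ i ∈ s, 0 ≤ f i) : ∏ i ∈ s, f i ≤ ((∑ i ∈ s, f i) / #s) ^ #s := by
  obtain rfl | hs := s.eq_empty_or_nonempty
  · simp
  have hcard : (0 : ℝ) < #s := by exact_mod_cast hs.card_pos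
  have h := prod_rpow_one_div_card_le_sum_div_card hs hf
  rw [one_div, rpow_inv_le_iff_of_pos (prod_nonneg hf) ((rpow_nonneg (prod_nonneg hf) _).trans h)
    hcard, rpow_natCast] at h
  exact h

theorem card_div_pow_card_mul_prod_le_one {ι : Type*} (s : Finset ι) {f : ι → ℝ} {T : ℝ}
    (hf : ∀ i ∈ s, 0 ≤ f i) (hT : ∑ i ∈ s, f i ≤ T) : (#s / T) ^ #s * ∏ i ∈ s, f i ≤ 1 := by
  have hT0 : 0 ≤ T := (sum_nonneg hf).trans hT
  calc (#s / T) ^ #s * ∏ i ∈ s, f i ≤ (#s / T) ^ #s * (T / #s) ^ #s := by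
        gcongr
        exact (prod_le_sum_div_card_pow s hf).trans
          (pow_le_pow_left₀ (div_nonneg (sum_nonneg hf) (by positivity)) (by gcongr) _)
    _ = ((#s * T) / (#s * T)) ^ #s := by rw [← mul_pow, div_mul_div_comm, mul_comm T]
    _ ≤ 1 := pow_le_one₀ (by positivity) (div_self_le_one _)

section AntitoneSequence

variable {lam : ℕ → ℝ} {d m l : ℕ}

theorem pow_le_prod_Ico_of_antitoneOn (hanti : AntitoneOn lam (Set.Iio d)) {i : ℕ}
    (hi0 : 0 ≤ lam i) (hli : l ≤ i) (hid : i < d) : lam i ^ (l - m) ≤ ∏ j ∈ Ico m l, lam j :=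
  calc lam i ^ (l - m) = ∏ _j ∈ Ico m l, lam i := by simp
    _ ≤ ∏ j ∈ Ico m l, lam j := prod_le_prod (fun _ _ ↦ hi0) fun j hj ↦
        hanti (by simp at hj ⊢; omega) (by simpa using hid) (by simp at hj; omega)

theorem le_prod_Ico_rpow_of_antitoneOn (hanti : AntitoneOn lam (Set.Iio d)) (hml : m < l) {i : ℕ}
    (hi0 : 0 ≤ lam i) (hli : l ≤ i) (hid : i < d) :
    lam i ≤ (∏ j ∈ Ico m l, lam j) ^ (1 / ((l : ℝ) - m)) := by
  have h := pow_le_prod_Ico_of_antitoneOn (m := m) hanti hi0 hli hid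
  rw [one_div, le_rpow_inv_iff_of_pos hi0 ((pow_nonneg hi0 _).trans h) (by simpa using hml),
    ← Nat.cast_sub hml.le, rpow_natCast]
  exact h

theorem sum_Ico_div_le_sum_range_div_of_antitoneOn (hanti : AntitoneOn lam (Set.Iio l))
    (hml : m < l) : (∑ i ∈ Ico m l, lam i) / ((l : ℝ) - m) ≤ (∑ i ∈ range l, lam i) / l := by
  have hlm : (0 : ℝ) < l - m := by simpa using hml
  have hB : ∑ i ∈ Ico m l, lam i ≤ (l - m) * lam m := by
    simpa [Nat.cast_sub hml.le] using sum_le_card_nsmul (Ico m l) lam (lam m) fun i hi ↦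
      hanti (by simpa using hml) (by simp at hi ⊢; omega) (by simp at hi; omega)
  have hA : m * lam m ≤ ∑ i ∈ range m, lam i := by
    simpa using card_nsmul_le_sum (range m) lam (lam m) fun i hi ↦
      hanti (by simp at hi ⊢; omega) (by simpa using hml) (by simp at hi; omega)
  rw [← sum_range_add_sum_Ico _ hml.le, div_le_div_iff₀ hlm (by linarith)]
  nlinarith [mul_le_mul_of_nonneg_right hB (Nat.cast_nonneg (α := ℝ) m),
    mul_le_mul_of_nonneg_left hA hlm.le]

theorem div_sum_pow_mul_prod_rpow_le_prod_Ico_rpow (hnonneg : ∀ i < d, 0 ≤ lam i)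
    (hanti : AntitoneOn lam (Set.Iio d)) (hml : m < l) (hld : l ≤ d) :
    ((m / ∑ i ∈ range d, lam i) ^ m * ∏ i ∈ range d, lam i) ^ (1 / ((d : ℝ) - m)) ≤
      (∏ i ∈ Ico m l, lam i) ^ (1 / ((l : ℝ) - m)) := by
  have hnonneg' : ∀ a b, b ≤ d → ∀ i ∈ Ico a b, 0 ≤ lam i := fun a b hb i hi ↦
    hnonneg i (by simp at hi; omega)
  set g := (∏ i ∈ Ico m l, lam i) ^ (1 / ((l : ℝ) - m))
  have hg0 : 0 ≤ g := rpow_nonneg (prod_nonneg (hnonneg' m l hld)) _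
  have hB : ∏ i ∈ Ico m l, lam i = g ^ (l - m) := by
    rw [← rpow_natCast, ← rpow_mul (prod_nonneg (hnonneg' m l hld)), Nat.cast_sub hml.le,
      one_div_mul_cancel (sub_pos.2 (by exact_mod_cast hml)).ne', rpow_one]
  have hC : ∏ i ∈ Ico l d, lam i ≤ g ^ (d - l) := by
    calc ∏ i ∈ Ico l d, lam i ≤ ∏ _i ∈ Ico l d, g := prod_le_prod (hnonneg' l d le_rfl)
          fun i hi ↦ le_prod_Ico_rpow_of_antitoneOn hanti hml (hnonneg' l d le_rfl i hi)
            (by simp at hi; omega) (by simp at hi; omega)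
      _ = g ^ (d - l) := by simp
  have hA : (m / ∑ i ∈ range d, lam i) ^ m * ∏ i ∈ range m, lam i ≤ 1 := by
    simpa using card_div_pow_card_mul_prod_le_one (range m) (f := lam)
      (fun i hi ↦ hnonneg i (by simp at hi; omega)) (sum_le_sum_of_subset_of_nonneg
        (range_subset_range.2 (by omega)) fun i hi _ ↦ hnonneg i (by simpa using hi))
  have key : (m / ∑ i ∈ range d, lam i) ^ m * ∏ i ∈ range d, lam i ≤ g ^ (d - m) :=
    calc (m / ∑ i ∈ range d, lam i) ^ m * ∏ i ∈ range d, lam i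
        = ((m / ∑ i ∈ range d, lam i) ^ m * ∏ i ∈ range m, lam i) *
            (∏ i ∈ Ico m l, lam i) * ∏ i ∈ Ico l d, lam i := by
          rw [← prod_range_mul_prod_Ico _ hld, ← prod_range_mul_prod_Ico _ hml.le]; ring
      _ ≤ 1 * g ^ (l - m) * g ^ (d - l) := by
          rw [hB]; gcongr
          exact prod_nonneg (hnonneg' l d le_rfl)
      _ = g ^ (d - m) := by rw [one_mul, ← pow_add]; congr 1; omega
  have hmd : m < d := hml.trans_le hld
  have hS0 : 0 ≤ ∑ i ∈ range d, lam i := sum_nonneg fun i hi ↦ hnonneg i (by simpa using hi)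
  have hP0 : 0 ≤ ∏ i ∈ range d, lam i := prod_nonneg fun i hi ↦ hnonneg i (by simpa using hi)
  rw [one_div, rpow_inv_le_iff_of_pos (by positivity) hg0 (sub_pos.2 (by exact_mod_cast hmd)),
    ← Nat.cast_sub hmd.le, rpow_natCast]
  exact key

theorem sum_Ico_div_le_sub_mul_div_sum_pow_mul_prod_rpow (hnonneg : ∀ i < d, 0 ≤ lam i)
    (hanti : AntitoneOn lam (Set.Iio d)) (hml : m < l) (hld : l < d) :
    (∑ i ∈ Ico m l, lam i) / ((l : ℝ) - m) ≤ (∑ i ∈ range d, lam i) / l -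
      ((d : ℝ) / l - 1) *
        ((l / ∑ i ∈ range d, lam i) ^ l * ∏ i ∈ range d, lam i) ^ (1 / ((d : ℝ) - l)) := by
  set S := ∑ i ∈ range d, lam i
  set SC := ∑ i ∈ Ico l d, lam i
  set t := ((l / S) ^ l * ∏ i ∈ range d, lam i) ^ (1 / ((d : ℝ) - l))
  have hnonneg_range : ∀ n ≤ d, ∀ i ∈ range n, 0 ≤ lam i := fun n hn i hi ↦
    hnonneg i (by simp at hi; omega)
  have hnonneg_tail : ∀ i ∈ Ico l d, 0 ≤ lam i := fun i hi ↦ hnonneg i (by simp at hi; omega)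
  have hl : (0 : ℝ) < l := by exact_mod_cast hml.trans_le' (Nat.zero_le m)
  have hdl : (0 : ℝ) < d - l := sub_pos.2 (by exact_mod_cast hld)
  have hhead : (l / S) ^ l * ∏ i ∈ range l, lam i ≤ 1 := by
    simpa using card_div_pow_card_mul_prod_le_one (range l) (hnonneg_range l hld.le)
      (sum_le_sum_of_subset_of_nonneg (range_subset_range.2 hld.le) fun i hi _ ↦
        hnonneg_range d le_rfl i hi)
  have hprod : (l / S) ^ l * ∏ i ∈ range d, lam i ≤ ∏ i ∈ Ico l d, lam i := by
    rw [← prod_range_mul_prod_Ico _ hld.le, ← mul_assoc]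
    exact mul_le_of_le_one_left (prod_nonneg hnonneg_tail) hhead
  have ht : (d - l) * t ≤ SC := by
    have hS0 : 0 ≤ S := sum_nonneg (hnonneg_range d le_rfl)
    have hP0 : 0 ≤ ∏ i ∈ range d, lam i := prod_nonneg (hnonneg_range d le_rfl)
    have hamgm := prod_rpow_one_div_card_le_sum_div_card (s := Ico l d) (f := lam)
      (nonempty_Ico.2 hld) hnonneg_tail
    rw [Nat.card_Ico, Nat.cast_sub hld.le] at hamgm
    rw [← le_div_iff₀' hdl]
    exact (rpow_le_rpow (by positivity) hprod (by positivity)).trans hamgm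
  have hsum : ∑ i ∈ range l, lam i = S - SC :=
    eq_sub_of_add_eq (sum_range_add_sum_Ico lam hld.le)
  calc (∑ i ∈ Ico m l, lam i) / ((l : ℝ) - m) ≤ (S - SC) / l :=
        hsum ▸ sum_Ico_div_le_sum_range_div_of_antitoneOn
          (hanti.mono (Set.Iio_subset_Iio hld.le)) hml
    _ ≤ (S - (d - l) * t) / l := by gcongr
    _ = S / l - (d / l - 1) * t := by field_simp

end AntitoneSequence

theorem stmt6_general (d : ℕ) (lam : ℕ → ℝ)
    (hmono : ∀ i j, i ≤ j → j < d → lam j ≤ lam i)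
    (hpos : ∀ i, i < d → 0 < lam i)
    (S P : ℝ) (hS : S = ∑ i ∈ Finset.range d, lam i)
    (hP : P = ∏ i ∈ Finset.range d, lam i)
    (k l : ℕ) (hk1 : 1 ≤ k) (hkl : k ≤ l) (hl : l ≤ d - 1) :
    ((((k : ℝ) - 1) / S) ^ (k - 1) * P) ^ ((1 : ℝ) / ((d : ℝ) - k + 1)) ≤
      (∏ i ∈ Finset.Ico (k - 1) l, lam i) ^ ((1 : ℝ) / ((l : ℝ) - k + 1)) ∧
    (∏ i ∈ Finset.Ico (k - 1) l, lam i) ^ ((1 : ℝ) / ((l : ℝ) - k + 1)) ≤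
      (∑ i ∈ Finset.Ico (k - 1) l, lam i) / ((l : ℝ) - k + 1) ∧
    (∑ i ∈ Finset.Ico (k - 1) l, lam i) / ((l : ℝ) - k + 1) ≤
      S / l - ((d : ℝ) / l - 1) * ((((l : ℝ) / S) ^ l * P) ^ ((1 : ℝ) / ((d : ℝ) - l))) := by
  obtain ⟨m, rfl⟩ : ∃ m, k = m + 1 := ⟨k - 1, by omega⟩
  subst hS hP
  have hml : m < l := by omega
  have hld : l < d := by omega
  have hanti : AntitoneOn lam (Set.Iio d) := fun i _ j hj hij ↦ hmono i j hij hj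
  have hnonneg : ∀ i < d, 0 ≤ lam i := fun i hi ↦ (hpos i hi).le
  have hk : ((m + 1 : ℕ) : ℝ) - 1 = m := by push_cast; ring
  have hdk : (d : ℝ) - (m + 1 : ℕ) + 1 = d - m := by push_cast; ring
  have hlk : (l : ℝ) - (m + 1 : ℕ) + 1 = l - m := by push_cast; ring
  rw [hk, hdk, hlk, Nat.add_sub_cancel]
  refine ⟨div_sum_pow_mul_prod_rpow_le_prod_Ico_rpow hnonneg hanti hml hld.le, ?_,
    sum_Ico_div_le_sub_mul_div_sum_pow_mul_prod_rpow hnonneg hanti hml hld⟩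
  simpa [Nat.cast_sub hml.le] using prod_rpow_one_div_card_le_sum_div_card
    (nonempty_Ico.2 hml) fun i hi ↦ hnonneg i (by simp at hi; omega)

theorem stmt6 (d : ℕ) (hd : 0 < d) (lam : ℕ → ℝ)
    (hmono : ∀ i j, i ≤ j → j < d → lam j ≤ lam i)
    (hpos : ∀ i, i < d → 0 < lam i)
    (S P : ℝ) (hS : S = ∑ i ∈ Finset.range d, lam i)
    (hP : P = ∏ i ∈ Finset.range d, lam i)
    (k l : ℕ) (hk1 : 1 ≤ k) (hkl : k ≤ l) (hl : l ≤ d - 1) :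
    ((((k : ℝ) - 1) / S) ^ (k - 1) * P) ^ ((1 : ℝ) / ((d : ℝ) - k + 1)) ≤
      (∏ i ∈ Finset.Ico (k - 1) l, lam i) ^ ((1 : ℝ) / ((l : ℝ) - k + 1)) ∧
    (∏ i ∈ Finset.Ico (k - 1) l, lam i) ^ ((1 : ℝ) / ((l : ℝ) - k + 1)) ≤
      (∑ i ∈ Finset.Ico (k - 1) l, lam i) / ((l : ℝ) - k + 1) ∧
    (∑ i ∈ Finset.Ico (k - 1) l, lam i) / ((l : ℝ) - k + 1) ≤
      S / l - ((d : ℝ) / l - 1) * ((((l : ℝ) / S) ^ l * P) ^ ((1 : ℝ) / ((d : ℝ) - l))) :=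
  stmt6_general d lam hmono hpos S P hS hP k l hk1 hkl hl
end

section
/- Let λ₁ ≥ λ₂ ≥ ⋯ ≥ λ_d > 0 with sum S and product P, and let 1 ≤ k ≤ d−2. Then λ₁ ⋯ λ_k ≤ ( (1/P) · ( (1/(d−k)) · (S/(k+1))^(k+1) )^(d−k) )^(1/(d−k−1)). -/
/-!
Split the product at `k`: write `Q` for the product of the `k` largest terms, `R` and `U` for the
product and sum of the remaining `m = d - k` terms, so that `P = Q R` and `S = ∑_{i<k} λ_i + U`.
AM-GM on the tail gives `R ≤ (U / m)^m`, and AM-GM on the `k + 1` numbers `λ_0, …, λ_{k-1}, U`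
gives `Q U ≤ (S / (k+1))^(k+1)`. Hence `Q^(m-1) P = Q^m R ≤ (Q U / m)^m ≤ ((S/(k+1))^(k+1) / m)^m`,
and the claim is the `(m-1)`-th root of this.
-/

open Finset Real

namespace Finset

variable {ι : Type*}

theorem prod_le_sum_div_card_pow (s : Finset ι) (f : ι → ℝ) (hf : ∀ i ∈ s, 0 ≤ f i) :
    ∏ i ∈ s, f i ≤ ((∑ i ∈ s, f i) / #s) ^ #s := by
  rcases s.eq_empty_or_nonempty with rfl | hs
  · simp
  have hcard : (0 : ℝ) < #s := by exact_mod_cast hs.card_pos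
  have amgm := Real.geom_mean_le_arith_mean s 1 f (fun _ _ => zero_le_one) (by simpa using hcard) hf
  simp only [Pi.one_apply, rpow_one, one_mul, sum_const, nsmul_eq_mul, mul_one] at amgm
  rw [rpow_inv_le_iff_of_pos (prod_nonneg hf) (div_nonneg (sum_nonneg hf) hcard.le) hcard,
    rpow_natCast] at amgm
  exact amgm

theorem prod_mul_le_sum_add_div_card_add_one_pow (s : Finset ι) (f : ι → ℝ)
    (hf : ∀ i ∈ s, 0 ≤ f i) {u : ℝ} (hu : 0 ≤ u) :
    (∏ i ∈ s, f i) * u ≤ ((∑ i ∈ s, f i + u) / (#s + 1)) ^ (#s + 1) := by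
  have amgm := prod_le_sum_div_card_pow s.insertNone (fun o => o.elim u f) <| by
    rintro (_ | i) hi
    · exact hu
    · exact hf i (by simpa using hi)
  rw [prod_insertNone, sum_insertNone, card_insertNone] at amgm
  simpa [mul_comm, add_comm] using amgm

theorem prod_pow_card_mul_prod_le (s t : Finset ι) (f : ι → ℝ) (hs : ∀ i ∈ s, 0 ≤ f i)
    (ht : ∀ i ∈ t, 0 ≤ f i) :
    (∏ i ∈ s, f i) ^ #t * ∏ i ∈ t, f i ≤
      (1 / #t * ((∑ i ∈ s, f i + ∑ i ∈ t, f i) / (#s + 1)) ^ (#s + 1)) ^ #t := by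
  have hQ : 0 ≤ ∏ i ∈ s, f i := prod_nonneg hs
  have hU : 0 ≤ ∑ i ∈ t, f i := sum_nonneg ht
  calc (∏ i ∈ s, f i) ^ #t * ∏ i ∈ t, f i
      ≤ (∏ i ∈ s, f i) ^ #t * ((∑ i ∈ t, f i) / #t) ^ #t := by
        gcongr; exact prod_le_sum_div_card_pow t f ht
    _ = (1 / #t * ((∏ i ∈ s, f i) * ∑ i ∈ t, f i)) ^ #t := by ring
    _ ≤ _ := by
        gcongr
        exact prod_mul_le_sum_add_div_card_add_one_pow s f hs hU

end Finset

theorem stmt7_general (d : ℕ) (lam : ℕ → ℝ)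
    (hpos : ∀ i, i < d → 0 < lam i)
    (S P : ℝ) (hS : S = ∑ i ∈ Finset.range d, lam i)
    (hP : P = ∏ i ∈ Finset.range d, lam i)
    (k : ℕ) (hk1 : 1 ≤ k) (hk2 : k ≤ d - 2) :
    ∏ i ∈ Finset.range k, lam i ≤
      ((1 / P) * ((1 / ((d : ℝ) - k)) * (S / ((k : ℝ) + 1)) ^ (k + 1)) ^ (d - k)) ^
        ((1 : ℝ) / ((d : ℝ) - k - 1)) := by
  have hkd : k ≤ d := by omega
  obtain ⟨m, hm⟩ : ∃ m, d - k = m + 1 := ⟨d - k - 1, by omega⟩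
  have hm0 : (0 : ℝ) < m := by norm_cast; omega
  have hdk : (d : ℝ) - k = m + 1 := by rw [← Nat.cast_sub hkd, hm]; push_cast; ring
  have hhead : ∀ i ∈ range k, 0 ≤ lam i := fun i hi => (hpos i (by simp at hi; omega)).le
  have hP0 : 0 < P := hP ▸ prod_pos fun i hi => hpos i (mem_range.mp hi)
  have hbound := prod_pow_card_mul_prod_le (range k) (Ico k d) lam hhead
    fun i hi => (hpos i (mem_Ico.mp hi).2).le
  rw [card_range, Nat.card_Ico, sum_range_add_sum_Ico _ hkd, ← hS, hm, pow_succ, mul_assoc,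
    prod_range_mul_prod_Ico _ hkd, ← hP, ← le_div_iff₀ hP0, div_eq_inv_mul, ← one_div] at hbound
  push_cast at hbound
  have hQ : 0 ≤ ∏ i ∈ range k, lam i := prod_nonneg hhead
  rw [hdk, hm, add_sub_cancel_right, one_div (m : ℝ),
    le_rpow_inv_iff_of_pos hQ ((pow_nonneg hQ m).trans hbound) hm0, rpow_natCast]
  exact hbound

theorem stmt7 (d : ℕ) (hd : 0 < d) (lam : ℕ → ℝ)
    (hmono : ∀ i j, i ≤ j → j < d → lam j ≤ lam i)
    (hpos : ∀ i, i < d → 0 < lam i)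
    (S P : ℝ) (hS : S = ∑ i ∈ Finset.range d, lam i)
    (hP : P = ∏ i ∈ Finset.range d, lam i)
    (k : ℕ) (hk1 : 1 ≤ k) (hk2 : k ≤ d - 2) :
    ∏ i ∈ Finset.range k, lam i ≤
      ((1 / P) * ((1 / ((d : ℝ) - k)) * (S / ((k : ℝ) + 1)) ^ (k + 1)) ^ (d - k)) ^
        ((1 : ℝ) / ((d : ℝ) - k - 1)) :=
  stmt7_general d lam hpos S P hS hP k hk1 hk2
end

section
/- Let λ₁ ≥ λ₂ ≥ ⋯ ≥ λ_d > 0 with sum S and product P, and let 2 ≤ k ≤ d−1. Then λ_{d−k+1} ⋯ λ_d ≥ ( k · P · ((d−k+1)/S)^(d−k+1) )^(k/(k−1)). -/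
/-! With `T` and `U` the product and the sum of the `k` numbers `λ_{d-k}, …, λ_{d-1}` and `Q` the
product of the other `m = d - k`, AM–GM applied to those `k` numbers gives `k T^{1/k} ≤ U`, and
applied to the `m + 1` numbers `λ_0, …, λ_{m-1}, U`, whose sum is `S`, it gives
`Q U ≤ (S/(m+1))^{m+1}`. Hence `k P ((m+1)/S)^{m+1} = k Q T ((m+1)/S)^{m+1} ≤ T^{1-1/k}`, and
raising this to the power `k/(k-1)` gives the claim. -/

open Finset Real

namespace Real

variable {ι : Type*}

theorem prod_rpow_inv_card_le_sum_div_card {s : Finset ι} (hs : s.Nonempty) {f : ι → ℝ}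
    (hf : ∀ i ∈ s, 0 ≤ f i) :
    (∏ i ∈ s, f i) ^ (#s : ℝ)⁻¹ ≤ (∑ i ∈ s, f i) / #s := by
  simpa using geom_mean_le_arith_mean s (fun _ ↦ 1) f (fun _ _ ↦ zero_le_one)
    (by simpa using hs) hf

theorem prod_le_sum_div_card_pow (s : Finset ι) {f : ι → ℝ} (hf : ∀ i ∈ s, 0 ≤ f i) :
    ∏ i ∈ s, f i ≤ ((∑ i ∈ s, f i) / #s) ^ #s := by
  rcases s.eq_empty_or_nonempty with rfl | hs
  · simp
  calc ∏ i ∈ s, f i = ((∏ i ∈ s, f i) ^ (#s : ℝ)⁻¹) ^ #s :=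
        (rpow_inv_natCast_pow (prod_nonneg hf) hs.card_ne_zero).symm
    _ ≤ ((∑ i ∈ s, f i) / #s) ^ #s := by
        gcongr
        · exact rpow_nonneg (prod_nonneg hf) _
        · exact prod_rpow_inv_card_le_sum_div_card hs hf

theorem prod_mul_le_sum_add_div_card_add_one_pow (s : Finset ι) {f : ι → ℝ}
    (hf : ∀ i ∈ s, 0 ≤ f i) {a : ℝ} (ha : 0 ≤ a) :
    (∏ i ∈ s, f i) * a ≤ ((∑ i ∈ s, f i + a) / (#s + 1)) ^ (#s + 1) := by
  have h := prod_le_sum_div_card_pow (insertNone s) (f := fun o ↦ o.elim a f)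
    (by rintro (_ | i) hi <;> simp_all)
  simpa [prod_insertNone, sum_insertNone, mul_comm, add_comm] using h

theorem card_mul_prod_mul_prod_rpow_le (s t : Finset ι) (ht : t.Nonempty) {x : ι → ℝ}
    (hxs : ∀ i ∈ s, 0 ≤ x i) (hxt : ∀ i ∈ t, 0 ≤ x i) :
    #t * (∏ i ∈ s, x i) * (∏ i ∈ t, x i) ^ (#t : ℝ)⁻¹ ≤
      ((∑ i ∈ s, x i + ∑ i ∈ t, x i) / (#s + 1)) ^ (#s + 1) := by
  have hgm : #t * (∏ i ∈ t, x i) ^ (#t : ℝ)⁻¹ ≤ ∑ i ∈ t, x i := by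
    have := prod_rpow_inv_card_le_sum_div_card ht hxt
    rwa [le_div_iff₀' (by simpa using ht.card_pos)] at this
  calc #t * (∏ i ∈ s, x i) * (∏ i ∈ t, x i) ^ (#t : ℝ)⁻¹
      = (∏ i ∈ s, x i) * (#t * (∏ i ∈ t, x i) ^ (#t : ℝ)⁻¹) := by ring
    _ ≤ (∏ i ∈ s, x i) * ∑ i ∈ t, x i := by gcongr; exact prod_nonneg hxs
    _ ≤ _ := prod_mul_le_sum_add_div_card_add_one_pow s hxs (sum_nonneg hxt)

theorem mul_rpow_div_sub_one_le {k c T : ℝ} (hk : 1 < k) (hT : 0 < T) (hc : 0 ≤ c)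
    (h : c * T ^ k⁻¹ ≤ 1) : (c * T) ^ (k / (k - 1)) ≤ T := by
  have hsplit : c * T = c * T ^ k⁻¹ * T ^ ((k - 1) / k) := by
    rw [mul_assoc, ← rpow_add hT, show k⁻¹ + (k - 1) / k = 1 by field_simp; ring, rpow_one]
  calc (c * T) ^ (k / (k - 1)) ≤ (T ^ ((k - 1) / k)) ^ (k / (k - 1)) := by
        gcongr
        rw [hsplit]
        exact mul_le_of_le_one_left (rpow_nonneg hT.le _) h
    _ = T := by
        rw [← rpow_mul hT.le, div_mul_div_cancel₀ (by linarith), div_self (by linarith), rpow_one]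

end Real

theorem stmt8_general (d : ℕ) (lam : ℕ → ℝ)
    (hpos : ∀ i, i < d → 0 < lam i)
    (S P : ℝ) (hS : S = ∑ i ∈ Finset.range d, lam i)
    (hP : P = ∏ i ∈ Finset.range d, lam i)
    (k : ℕ) (hk1 : 2 ≤ k) (hk2 : k ≤ d - 1) :
    ∏ i ∈ Finset.Ico (d - k) d, lam i ≥
      ((k : ℝ) * P * (((d : ℝ) - k + 1) / S) ^ (d - k + 1)) ^ ((k : ℝ) / ((k : ℝ) - 1)) := by
  set m := d - k
  have hmd : m ≤ d := Nat.sub_le d k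
  have hcard : #(Ico m d) = k := by simp only [Nat.card_Ico]; omega
  have hlam : ∀ i ∈ range d, 0 < lam i := fun i hi ↦ hpos i (mem_range.mp hi)
  have hQ : ∀ i ∈ range m, 0 ≤ lam i := fun i hi ↦ (hlam i (by simp at hi ⊢; omega)).le
  have hT : ∀ i ∈ Ico m d, 0 < lam i := fun i hi ↦ hpos i (mem_Ico.mp hi).2
  have hSpos : 0 < S := hS ▸ sum_pos hlam (by simp; omega)
  have hamgm := card_mul_prod_mul_prod_rpow_le (range m) (Ico m d) (nonempty_Ico.mpr (by omega))
    hQ (fun i hi ↦ (hT i hi).le)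
  rw [sum_range_add_sum_Ico _ hmd, ← hS, hcard, card_range] at hamgm
  have hy : 0 ≤ ((m + 1 : ℝ) / S) ^ (m + 1) := by positivity
  have hc : (k * (∏ i ∈ range m, lam i) * ((m + 1) / S) ^ (m + 1)) *
      (∏ i ∈ Ico m d, lam i) ^ (k : ℝ)⁻¹ ≤ 1 :=
    calc _ = (k * ∏ i ∈ range m, lam i) * (∏ i ∈ Ico m d, lam i) ^ (k : ℝ)⁻¹ *
          ((m + 1) / S) ^ (m + 1) := by ring
      _ ≤ (S / (m + 1)) ^ (m + 1) * ((m + 1) / S) ^ (m + 1) := by gcongr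
      _ = 1 := by rw [← mul_pow, div_mul_div_cancel₀ (by positivity), div_self hSpos.ne', one_pow]
  convert mul_rpow_div_sub_one_le (k := k) (by exact_mod_cast hk1) (prod_pos hT)
    (mul_nonneg (mul_nonneg k.cast_nonneg (prod_nonneg hQ)) hy) hc using 2
  rw [hP, ← prod_range_mul_prod_Ico _ hmd, Nat.cast_sub (by omega)]
  ring

theorem stmt8 (d : ℕ) (hd : 0 < d) (lam : ℕ → ℝ)
    (hmono : ∀ i j, i ≤ j → j < d → lam j ≤ lam i)
    (hpos : ∀ i, i < d → 0 < lam i)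
    (S P : ℝ) (hS : S = ∑ i ∈ Finset.range d, lam i)
    (hP : P = ∏ i ∈ Finset.range d, lam i)
    (k : ℕ) (hk1 : 2 ≤ k) (hk2 : k ≤ d - 1) :
    ∏ i ∈ Finset.Ico (d - k) d, lam i ≥
      ((k : ℝ) * P * (((d : ℝ) - k + 1) / S) ^ (d - k + 1)) ^ ((k : ℝ) / ((k : ℝ) - 1)) :=
  stmt8_general d lam hpos S P hS hP k hk1 hk2
end

section
/- Let λ₁ ≥ λ₂ ≥ ⋯ ≥ λ_d > 0 with sum S and product P, and let 1 ≤ k ≤ d. Then λ₁ + ⋯ + λ_k ≤ ((k+1)^(k+1)/k^k) · (1/P) · (S/(d+1))^(d+1). -/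
/-! Split the sum `Q` of the first `k` numbers into the piece `Q / (k + 1)` and the scaled
values `k / (k + 1) · λᵢ`, `i < k`. Together with the remaining `λᵢ` these are `d + 1`
nonnegative numbers with sum `S` and product `Q · k^k / (k + 1)^(k + 1) · P`, so AM-GM gives
the bound; the split weight `1 / (k + 1)` is the one that optimizes it. -/

open Finset Real

theorem Real.prod_le_mean_pow {ι : Type*} (s : Finset ι) {z : ι → ℝ} (hz : ∀ i ∈ s, 0 ≤ z i) :
    ∏ i ∈ s, z i ≤ ((∑ i ∈ s, z i) / #s) ^ #s := by
  rcases s.eq_empty_or_nonempty with rfl | hs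
  · simp
  have hn : (#s : ℝ) ≠ 0 := Nat.cast_ne_zero.mpr hs.card_ne_zero
  have h := geom_mean_le_arith_mean_weighted s (fun _ => (#s : ℝ)⁻¹) z (fun _ _ => by positivity)
    (by rw [sum_const, nsmul_eq_mul, mul_inv_cancel₀ hn]) hz
  rw [finsetProd_rpow s z hz, ← mul_sum, inv_mul_eq_div] at h
  calc ∏ i ∈ s, z i = ((∏ i ∈ s, z i) ^ ((#s : ℝ))⁻¹) ^ #s :=
        (rpow_inv_natCast_pow (prod_nonneg hz) hs.card_ne_zero).symm
    _ ≤ ((∑ i ∈ s, z i) / #s) ^ #s := pow_le_pow_left₀ (rpow_nonneg (prod_nonneg hz) _) h _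

theorem Real.mul_prod_le_mean_pow {ι : Type*} (s : Finset ι) {x : ℝ} {z : ι → ℝ} (hx : 0 ≤ x)
    (hz : ∀ i ∈ s, 0 ≤ z i) :
    x * ∏ i ∈ s, z i ≤ ((x + ∑ i ∈ s, z i) / (#s + 1)) ^ (#s + 1) := by
  have h := prod_le_mean_pow (insertNone s) (z := fun o => o.elim x z)
    (by simpa only [forall_mem_insertNone] using ⟨hx, hz⟩)
  simpa only [prod_insertNone, sum_insertNone, card_insertNone, Nat.cast_add_one,
    Option.elim_none, Option.elim_some] using h

section ScaleOn

variable {ι : Type*} [DecidableEq ι] {s t : Finset ι}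

theorem Finset.sum_ite_mem_mul (hts : t ⊆ s) (c : ℝ) (f : ι → ℝ) :
    ∑ i ∈ s, (if i ∈ t then c else 1) * f i = ∑ i ∈ s, f i - (1 - c) * ∑ i ∈ t, f i := by
  have hsplit : ∀ i, (if i ∈ t then c else 1) * f i = f i - if i ∈ t then (1 - c) * f i else 0 := by
    intro i; split_ifs <;> ring
  simp only [hsplit, sum_sub_distrib, sum_ite_mem, inter_eq_right.mpr hts, mul_sum]

theorem Finset.prod_ite_mem_mul (hts : t ⊆ s) (c : ℝ) (f : ι → ℝ) :
    ∏ i ∈ s, (if i ∈ t then c else 1) * f i = c ^ #t * ∏ i ∈ s, f i := by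
  rw [prod_mul_distrib, prod_ite_mem, inter_eq_right.mpr hts, prod_const]

end ScaleOn

theorem Finset.sum_le_div_prod_mul_mean_pow {ι : Type*} {s t : Finset ι} (hts : t ⊆ s)
    {lam : ι → ℝ} (hpos : ∀ i ∈ s, 0 < lam i) :
    ∑ i ∈ t, lam i ≤ (((#t : ℝ) + 1) ^ (#t + 1) / (#t : ℝ) ^ #t) * (1 / ∏ i ∈ s, lam i) *
      ((∑ i ∈ s, lam i) / ((#s : ℝ) + 1)) ^ (#s + 1) := by
  classical
  set k : ℕ := #t
  set Q := ∑ i ∈ t, lam i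
  set P := ∏ i ∈ s, lam i
  set c : ℝ := k / (k + 1)
  have hP : 0 < P := prod_pos hpos
  have hk : (k : ℝ) ^ k ≠ 0 := by cases k <;> positivity
  have hamgm := mul_prod_le_mean_pow s (x := Q / (k + 1))
    (z := fun i => (if i ∈ t then c else 1) * lam i)
    (by positivity [sum_nonneg fun i hi => (hpos i (hts hi)).le])
    (fun i hi => mul_nonneg (by split_ifs <;> positivity) (hpos i hi).le)
  have hsum : Q / (k + 1) + ∑ i ∈ s, (if i ∈ t then c else 1) * lam i = ∑ i ∈ s, lam i := by
    rw [sum_ite_mem_mul hts]; simp only [c, Q]; field_simp; ring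
  rw [hsum, prod_ite_mem_mul hts] at hamgm
  calc Q = ((k + 1) ^ (k + 1) / (k : ℝ) ^ k) * (1 / P) * (Q / (k + 1) * (c ^ k * P)) := by
        simp only [c, div_pow]; field_simp; ring
    _ ≤ _ := by gcongr

theorem stmt11_general (d : ℕ) (lam : ℕ → ℝ)
    (hpos : ∀ i, i < d → 0 < lam i)
    (S P : ℝ) (hS : S = ∑ i ∈ Finset.range d, lam i)
    (hP : P = ∏ i ∈ Finset.range d, lam i)
    (k : ℕ) (hk2 : k ≤ d) :
    ∑ i ∈ Finset.range k, lam i ≤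
      (((k : ℝ) + 1) ^ (k + 1) / (k : ℝ) ^ k) * (1 / P) * (S / ((d : ℝ) + 1)) ^ (d + 1) := by
  subst hS hP
  simpa only [card_range] using
    sum_le_div_prod_mul_mean_pow (range_subset_range.mpr hk2) (fun i hi => hpos i (mem_range.mp hi))

theorem stmt11 (d : ℕ) (hd : 0 < d) (lam : ℕ → ℝ)
    (hmono : ∀ i j, i ≤ j → j < d → lam j ≤ lam i)
    (hpos : ∀ i, i < d → 0 < lam i)
    (S P : ℝ) (hS : S = ∑ i ∈ Finset.range d, lam i)
    (hP : P = ∏ i ∈ Finset.range d, lam i)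
    (k : ℕ) (hk1 : 1 ≤ k) (hk2 : k ≤ d) :
    ∑ i ∈ Finset.range k, lam i ≤
      (((k : ℝ) + 1) ^ (k + 1) / (k : ℝ) ^ k) * (1 / P) * (S / ((d : ℝ) + 1)) ^ (d + 1) :=
  stmt11_general d lam hpos S P hS hP k hk2
end

section
/- For positive reals λ₁, …, λ_d with sum S and product P, for any t with 0 < t < 1 and any 1 ≤ k ≤ d: λ₁ + ⋯ + λ_k ≤ (1/(t(1−t)^k)) · (1/P) · (S/(d+1))^(d+1), where λ are arranged in nonincreasing order. -/
/-!
Apply AM-GM to the `d + 1` nonnegative numbers `t σ`, `(1 - t) λ₁, …, (1 - t) λ_k`,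
`λ_{k+1}, …, λ_d`, where `σ = λ₁ + ⋯ + λ_k`: their sum is `S` and their product is
`t (1 - t)^k σ P`.
-/

open Finset Real

namespace Finset

theorem prod_ite_mem_mul_s12 {ι M : Type*} [CommMonoid M] [DecidableEq ι] {s t : Finset ι}
    (hts : t ⊆ s) (c : M) (f : ι → M) :
    ∏ i ∈ s, (if i ∈ t then c else 1) * f i = c ^ #t * ∏ i ∈ s, f i := by
  rw [prod_mul_distrib, prod_ite_mem, inter_eq_right.mpr hts, prod_const]

theorem sum_ite_mem_mul_s12 {ι R : Type*} [CommRing R] [DecidableEq ι] {s t : Finset ι}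
    (hts : t ⊆ s) (c : R) (f : ι → R) :
    ∑ i ∈ s, (if i ∈ t then c else 1) * f i = ∑ i ∈ s, f i - (1 - c) * ∑ i ∈ t, f i := by
  have hsplit : ∀ i, (if i ∈ t then c else 1) * f i = f i - if i ∈ t then (1 - c) * f i else 0 := by
    intro i
    split_ifs <;> ring
  rw [sum_congr rfl fun i _ => hsplit i, sum_sub_distrib, sum_ite_mem, inter_eq_right.mpr hts,
    mul_sum]

end Finset

namespace Real

theorem prod_le_pow_sum_div_card {ι : Type*} (s : Finset ι) {z : ι → ℝ}
    (hz : ∀ i ∈ s, 0 ≤ z i) : ∏ i ∈ s, z i ≤ ((∑ i ∈ s, z i) / #s) ^ #s := by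
  rcases s.eq_empty_or_nonempty with rfl | hs
  · simp
  have hamgm := geom_mean_le_arith_mean s (fun _ => 1) z (fun _ _ => zero_le_one)
    (by simpa using hs) hz
  simp only [rpow_one, one_mul, sum_const, nsmul_eq_mul, mul_one] at hamgm
  have hprod : 0 ≤ ∏ i ∈ s, z i := prod_nonneg hz
  have hcard : (#s : ℝ) ≠ 0 := by simpa using hs.ne_empty
  calc ∏ i ∈ s, z i = ((∏ i ∈ s, z i) ^ (#s : ℝ)⁻¹) ^ #s := by
        rw [← rpow_natCast, ← rpow_mul hprod, inv_mul_cancel₀ hcard, rpow_one]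
    _ ≤ ((∑ i ∈ s, z i) / #s) ^ #s := pow_le_pow_left₀ (rpow_nonneg hprod _) hamgm _

theorem mul_prod_le_pow_card_add_one {ι : Type*} (s : Finset ι) {a : ℝ} {f : ι → ℝ}
    (ha : 0 ≤ a) (hf : ∀ i ∈ s, 0 ≤ f i) :
    a * ∏ i ∈ s, f i ≤ ((a + ∑ i ∈ s, f i) / (#s + 1)) ^ (#s + 1) := by
  have hamgm := prod_le_pow_sum_div_card (insertNone s) (z := fun o => o.elim a f) <| by
    rintro (_ | i) hi
    · exact ha
    · exact hf i (mem_insertNone.mp hi i rfl)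
  simpa [prod_insertNone, sum_insertNone, card_insertNone] using hamgm

end Real

theorem stmt12_general (d : ℕ) (lam : ℕ → ℝ)
    (hpos : ∀ i, i < d → 0 < lam i)
    (S P : ℝ) (hS : S = ∑ i ∈ Finset.range d, lam i)
    (hP : P = ∏ i ∈ Finset.range d, lam i)
    (k : ℕ) (hk2 : k ≤ d) (t : ℝ) (ht0 : 0 < t) (ht1 : t < 1) :
    ∑ i ∈ Finset.range k, lam i ≤
      (1 / (t * (1 - t) ^ k)) * (1 / P) * (S / ((d : ℝ) + 1)) ^ (d + 1) := by
  set σ := ∑ i ∈ range k, lam i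
  have hkd : range k ⊆ range d := range_subset_range.mpr hk2
  have hσ : 0 ≤ σ := sum_nonneg fun i hi => (hpos i (mem_range.mp (hkd hi))).le
  have hP0 : 0 < P := hP ▸ prod_pos fun i hi => hpos i (mem_range.mp hi)
  have hamgm := mul_prod_le_pow_card_add_one (range d) (a := t * σ)
    (f := fun i => (if i ∈ range k then 1 - t else 1) * lam i) (by positivity) <| by
      intro i hi
      exact mul_nonneg (by split_ifs <;> linarith) (hpos i (mem_range.mp hi)).le
  rw [prod_ite_mem_mul_s12 hkd, sum_ite_mem_mul_s12 hkd, ← hP, ← hS] at hamgm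
  simp only [card_range] at hamgm
  have hden : 0 < t * (1 - t) ^ k * P := by
    have : 0 < 1 - t := by linarith
    positivity
  rw [one_div_mul_one_div, one_div_mul_eq_div, le_div_iff₀ hden]
  calc σ * (t * (1 - t) ^ k * P) = t * σ * ((1 - t) ^ k * P) := by ring
    _ ≤ ((t * σ + (S - (1 - (1 - t)) * σ)) / (d + 1)) ^ (d + 1) := hamgm
    _ = (S / (d + 1)) ^ (d + 1) := by ring

theorem stmt12 (d : ℕ) (hd : 0 < d) (lam : ℕ → ℝ)
    (hmono : ∀ i j, i ≤ j → j < d → lam j ≤ lam i)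
    (hpos : ∀ i, i < d → 0 < lam i)
    (S P : ℝ) (hS : S = ∑ i ∈ Finset.range d, lam i)
    (hP : P = ∏ i ∈ Finset.range d, lam i)
    (k : ℕ) (hk1 : 1 ≤ k) (hk2 : k ≤ d) (t : ℝ) (ht0 : 0 < t) (ht1 : t < 1) :
    ∑ i ∈ Finset.range k, lam i ≤
      (1 / (t * (1 - t) ^ k)) * (1 / P) * (S / ((d : ℝ) + 1)) ^ (d + 1) :=
  stmt12_general d lam hpos S P hS hP k hk2 t ht0 ht1
end

section
/- Let λ₁ ≥ λ₂ ≥ ⋯ ≥ λ_d > 0 with sum S and product P. Then the largest term satisfies λ₁ ≤ S − (d−1) · (P/S)^(1/(d−1)). -/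
/-! Split off the largest term: `S = λ₁ + T` and `P = λ₁ Q`, where `T` and `Q` are the sum and
product of the remaining `d - 1` terms. Since `λ₁ ≤ S` we get `P / S ≤ Q`, and AM–GM on the
remaining terms gives `(d - 1) Q ^ (1/(d-1)) ≤ T = S - λ₁`. -/

open Finset Real

namespace Finset

variable {ι : Type*} {s : Finset ι} {z : ι → ℝ}

theorem card_mul_prod_rpow_one_div_card_le_sum (hs : s.Nonempty) (hz : ∀ i ∈ s, 0 ≤ z i) :
    (#s : ℝ) * (∏ i ∈ s, z i) ^ ((1 : ℝ) / #s) ≤ ∑ i ∈ s, z i := by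
  have hcard : (0 : ℝ) < #s := by exact_mod_cast hs.card_pos
  have amgm := Real.geom_mean_le_arith_mean s (fun _ ↦ 1) z (fun _ _ ↦ zero_le_one)
    (by simpa using hs.card_pos) hz
  simp only [rpow_one, sum_const, nsmul_eq_mul, mul_one, one_mul] at amgm
  rw [one_div, mul_comm]
  exact (le_div_iff₀ hcard).1 amgm

theorem prod_div_sum_le_prod_erase [DecidableEq ι] {a : ι} (ha : a ∈ s)
    (hz : ∀ i ∈ s, 0 < z i) :
    (∏ i ∈ s, z i) / ∑ i ∈ s, z i ≤ ∏ i ∈ s.erase a, z i := by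
  have hsum : 0 < ∑ i ∈ s, z i := sum_pos hz ⟨a, ha⟩
  have hQ : 0 ≤ ∏ i ∈ s.erase a, z i := prod_nonneg fun i hi ↦ (hz i (mem_of_mem_erase hi)).le
  have hle : z a ≤ ∑ i ∈ s, z i := single_le_sum (fun i hi ↦ (hz i hi).le) ha
  rw [div_le_iff₀ hsum, ← mul_prod_erase s z ha, mul_comm]
  exact mul_le_mul_of_nonneg_left hle hQ

theorem le_sum_sub_mul_prod_div_sum_rpow [DecidableEq ι] {a : ι} (ha : a ∈ s) (hs : 2 ≤ #s)
    (hz : ∀ i ∈ s, 0 < z i) :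
    z a ≤ ∑ i ∈ s, z i -
      ((#s : ℝ) - 1) * ((∏ i ∈ s, z i) / ∑ i ∈ s, z i) ^ ((1 : ℝ) / ((#s : ℝ) - 1)) := by
  have hcard : (#(s.erase a) : ℝ) = #s - 1 := by
    rw [card_erase_of_mem ha, Nat.cast_sub (by omega), Nat.cast_one]
  have hc : (0 : ℝ) ≤ #s - 1 := by rw [← hcard]; positivity
  have hrest : (s.erase a).Nonempty := card_pos.1 (by rw [card_erase_of_mem ha]; omega)
  have hratio : 0 ≤ (∏ i ∈ s, z i) / ∑ i ∈ s, z i :=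
    div_nonneg (prod_nonneg fun i hi ↦ (hz i hi).le) (sum_nonneg fun i hi ↦ (hz i hi).le)
  have amgm := card_mul_prod_rpow_one_div_card_le_sum hrest fun i hi ↦ (hz i (mem_of_mem_erase hi)).le
  rw [hcard] at amgm
  have hmono : ((∏ i ∈ s, z i) / ∑ i ∈ s, z i) ^ ((1 : ℝ) / ((#s : ℝ) - 1)) ≤
      (∏ i ∈ s.erase a, z i) ^ ((1 : ℝ) / ((#s : ℝ) - 1)) :=
    rpow_le_rpow hratio (prod_div_sum_le_prod_erase ha hz) (one_div_nonneg.2 hc)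
  have hsplit := add_sum_erase s z ha
  linarith [mul_le_mul_of_nonneg_left hmono hc]

end Finset

theorem stmt15_general (d : ℕ) (hd : 2 ≤ d) (lam : ℕ → ℝ)
    (hpos : ∀ i, i < d → 0 < lam i)
    (S P : ℝ) (hS : S = ∑ i ∈ Finset.range d, lam i)
    (hP : P = ∏ i ∈ Finset.range d, lam i) :
    lam 0 ≤ S - ((d : ℝ) - 1) * ((P / S) ^ ((1 : ℝ) / ((d : ℝ) - 1))) := by
  subst hS hP
  have key := le_sum_sub_mul_prod_div_sum_rpow (s := range d) (z := lam) (a := 0)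
    (mem_range.2 (by omega)) (by rwa [card_range]) fun i hi ↦ hpos i (mem_range.1 hi)
  rwa [card_range] at key

theorem stmt15 (d : ℕ) (hd : 2 ≤ d) (lam : ℕ → ℝ)
    (hmono : ∀ i j, i ≤ j → j < d → lam j ≤ lam i)
    (hpos : ∀ i, i < d → 0 < lam i)
    (S P : ℝ) (hS : S = ∑ i ∈ Finset.range d, lam i)
    (hP : P = ∏ i ∈ Finset.range d, lam i) :
    lam 0 ≤ S - ((d : ℝ) - 1) * ((P / S) ^ ((1 : ℝ) / ((d : ℝ) - 1))) :=
  stmt15_general d hd lam hpos S P hS hP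
end
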